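/- arXiv:1308.5584 — 3 statements merged into one kernel-verified Lean document; each statement's English description precedes it below -/
import Mathlib

section
/- Let Γᵢ (i = 1,…,r) be groups with counting functions satisfying: there exist constants C > 0 and δᵢ > 0 such that for all sufficiently large R, (1/C)·e^{δᵢR} ≤ #{γᵢ ∈ Γᵢ : R−1 ≤ dᵢ(oᵢ,γᵢoᵢ) < R} ≤ #{γᵢ ∈ Γᵢ : dᵢ(oᵢ,γᵢoᵢ) < R} ≤ C·e^{δᵢR}. Let Γ = Γ₁ × ⋯ × Γ_r act on the ℓ²-product X with basepoint o = (o₁,…,o_r). Then for every unit vector θ = (θ₁,…,θ_r) ∈ ℝ_{≥0}^r, the exponent of growth δ_θ(Γ) := lim_{ε→0} limsup_{n→∞} (1/n)·log #{γ ∈ Γ : d(o,γo) < n, ‖H(o,γo)/d(o,γo) − θ‖ < ε} equals Σᵢ δᵢθᵢ. -/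
/-!
The set counted at time `n` is squeezed between two product sets. It lies inside the product of
the orbit balls of radii `(θᵢ + ε) n`, of size `O(e^{∑ δᵢ (θᵢ + ε) n})`. It contains the
product of the sets `{|dᵢ - θᵢ s| ≤ 1}` for `s = n - √r - 1`: their points are within `√r` of
`s θ`, so for large `n` their direction is within `ε` of `θ`, and the shell lower bounds give them
size at least `∏ C⁻¹ e^{δᵢ θᵢ s}`. So the limsup of `log # / n` lies between `∑ δᵢ θᵢ` and
`∑ δᵢ (θᵢ + ε)`.

Comparing cardinalities needs the orbit balls to be finite (`Nat.card` of an infinite set is `0`).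
This follows from the lower bounds alone: every far shell is finite and nonempty, and left
translation by an element of a far enough shell maps a ball into a finite union of far shells.
-/

open Filter Set Real Topology

theorem finite_preimage_Ico_of_forall_finite {α : Type*} (f : α → ℝ) {R₀ : ℝ}
    (h : ∀ R, R₀ ≤ R → (f ⁻¹' Ico (R - 1) R).Finite) (b : ℝ) :
    (f ⁻¹' Ico R₀ b).Finite := by
  have hstep : ∀ k : ℕ, (f ⁻¹' Ico R₀ (R₀ + k)).Finite := by
    intro k
    induction k with
    | zero => simp
    | succ k ih =>
      have hk : (0 : ℝ) ≤ k := k.cast_nonneg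
      have hshell := h (R₀ + k + 1) (by linarith)
      rw [add_sub_cancel_right] at hshell
      have hsplit :
          Ico R₀ (R₀ + (k + 1 : ℕ)) = Ico R₀ (R₀ + k) ∪ Ico (R₀ + k) (R₀ + k + 1) := by
        rw [Nat.cast_succ, ← add_assoc, Ico_union_Ico_eq_Ico (by linarith) (by linarith)]
      rw [hsplit, preimage_union]
      exact ih.union hshell
  refine (hstep ⌈b - R₀⌉₊).subset (preimage_mono (Ico_subset_Ico_right ?_))
  linarith [Nat.le_ceil (b - R₀)]

section Orbit

variable {G X : Type*} [Group G] [MetricSpace X] [MulAction G X]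

def orbitBall (o : X) (R : ℝ) : Set G := {g | dist o (g • o) < R}

def orbitShell (o : X) (R : ℝ) : Set G := {g | R - 1 ≤ dist o (g • o) ∧ dist o (g • o) < R}

theorem finite_orbitBall_of_card_orbitShell_pos
    (hiso : ∀ (g : G) (x y : X), dist (g • x) (g • y) = dist x y) (o : X) {R₀ : ℝ}
    (hshell : ∀ R, R₀ ≤ R → 0 < Nat.card (orbitShell o R : Set G)) (R : ℝ) :
    (orbitBall o R : Set G).Finite := by
  set d : G → ℝ := fun g => dist o (g • o)
  have hfar : (d ⁻¹' Ico R₀ (|R| + |R₀| + 1 + R)).Finite :=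
    finite_preimage_Ico_of_forall_finite d
      (fun R' hR' => finite_coe_iff.1 (Nat.card_pos_iff.1 (hshell R' hR')).2) _
  obtain ⟨a, ha₁, ha₂⟩ := (Nat.card_pos_iff.1 (hshell (|R| + |R₀| + 1) (by
    linarith [le_abs_self R₀, abs_nonneg R]))).1.some
  refine (hfar.preimage (mul_right_injective a).injOn).subset fun b (hb : d b < R) => ?_
  have hab : dist (a • o) ((a * b) • o) = d b := by rw [mul_smul, hiso]
  have h₁ := dist_triangle o (a • o) ((a * b) • o)
  have h₂ := dist_triangle_right o (a • o) ((a * b) • o)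
  simp only [d] at *
  constructor <;> linarith [le_abs_self R, le_abs_self R₀]

variable (G) in
def OrbitGrowthBounds (o : X) (C δ R₀ : ℝ) : Prop :=
  ∀ R, R₀ ≤ R →
    (1 / C) * exp (δ * R) ≤ (Nat.card (orbitShell o R : Set G) : ℝ) ∧
      (Nat.card (orbitBall o R : Set G) : ℝ) ≤ C * exp (δ * R)

namespace OrbitGrowthBounds

variable {o : X} {C δ R₀ : ℝ} (h : OrbitGrowthBounds G o C δ R₀)
  (hiso : ∀ (g : G) (x y : X), dist (g • x) (g • y) = dist x y) (hC : 0 < C)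
include h hiso hC

theorem finite_orbitBall (R : ℝ) : (orbitBall o R : Set G).Finite :=
  finite_orbitBall_of_card_orbitShell_pos hiso o
    (fun R hR => Nat.cast_pos.1 ((h R hR).1.trans_lt' (by positivity))) R

theorem one_le : 1 ≤ C := by
  have hmono : Nat.card (orbitShell o R₀ : Set G) ≤ Nat.card (orbitBall o R₀ : Set G) :=
    Nat.card_mono (h.finite_orbitBall hiso hC R₀) fun g hg => hg.2
  have hle : 1 / C * exp (δ * R₀) ≤ C * exp (δ * R₀) :=
    (h R₀ le_rfl).1.trans ((Nat.cast_le.2 hmono).trans (h R₀ le_rfl).2)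
  have hinv : 1 / C ≤ C := le_of_mul_le_mul_right hle (exp_pos _)
  rw [div_le_iff₀ hC] at hinv
  nlinarith

theorem exists_card_orbitBall_le (hδ : 0 ≤ δ) :
    ∃ B, ∀ R, 0 ≤ R → (Nat.card (orbitBall o R : Set G) : ℝ) ≤ B * exp (δ * R) := by
  refine ⟨C * exp (δ * |R₀|), fun R hR => ?_⟩
  have hmono : Nat.card (orbitBall o R : Set G) ≤ Nat.card (orbitBall o (max R R₀) : Set G) :=
    Nat.card_mono (h.finite_orbitBall hiso hC _) fun g (hg : _ < R) =>
      hg.trans_le (le_max_left R R₀)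
  calc (Nat.card (orbitBall o R : Set G) : ℝ)
      ≤ C * exp (δ * max R R₀) := (Nat.cast_le.2 hmono).trans (h _ (le_max_right R R₀)).2
    _ ≤ C * exp (δ * |R₀|) * exp (δ * R) := by
      rw [mul_assoc, ← exp_add, ← mul_add]
      gcongr
      exact max_le (by linarith [abs_nonneg R₀]) (by linarith [le_abs_self R₀])

theorem eventually_le_card_abs_sub_le {t : ℝ} (ht : 0 ≤ t) :
    ∀ᶠ s in atTop, (1 / C) * exp (δ * (t * s)) ≤
      (Nat.card {g : G | |dist o (g • o) - t * s| ≤ 1} : ℝ) := by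
  have hfin : ∀ R, {g : G | |dist o (g • o) - R| ≤ 1}.Finite := fun R =>
    (h.finite_orbitBall hiso hC (R + 2)).subset fun g (hg : |_ - R| ≤ 1) => by
      show _ < R + 2
      linarith [(abs_le.1 hg).2]
  rcases ht.eq_or_lt with rfl | ht
  · refine Eventually.of_forall fun s => ?_
    simp only [zero_mul, mul_zero, exp_zero, mul_one, sub_zero]
    have hone : (1 : G) ∈ {g : G | |dist o (g • o)| ≤ 1} := by simp
    have hpos : 0 < Nat.card {g : G | |dist o (g • o)| ≤ 1} :=
      Nat.card_pos_iff.2 ⟨⟨⟨1, hone⟩⟩, by simpa using (hfin 0).to_subtype⟩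
    calc 1 / C ≤ 1 := (div_le_one hC).2 (h.one_le hiso hC)
      _ ≤ _ := Nat.one_le_cast.2 hpos
  · filter_upwards [(tendsto_id.const_mul_atTop ht).eventually_ge_atTop R₀]
      with s (hs : R₀ ≤ t * s)
    refine (h _ hs).1.trans (Nat.cast_le.2 (Nat.card_mono (hfin _) fun g ⟨hg₁, hg₂⟩ => ?_))
    show |dist o (g • o) - t * s| ≤ 1
    rw [abs_le]
    constructor <;> linarith

end OrbitGrowthBounds

end Orbit

section Cone

variable {E : Type*} [NormedAddCommGroup E] [NormedSpace ℝ E]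

def truncatedCone (θ : E) (ε R : ℝ) : Set E := {v | v ≠ 0 ∧ ‖v‖ < R ∧ ‖‖v‖⁻¹ • v - θ‖ < ε}

theorem norm_mul_norm_inv_smul_sub_le {θ : E} (hθ : ‖θ‖ = 1) (v : E) {s : ℝ} (hs : 0 ≤ s) :
    ‖v‖ * ‖‖v‖⁻¹ • v - θ‖ ≤ 2 * ‖v - s • θ‖ := by
  rcases eq_or_ne v 0 with rfl | hv
  · simp
  have hv' : ‖v‖ ≠ 0 := norm_ne_zero_iff.2 hv
  have hrescale : ‖v‖ * ‖‖v‖⁻¹ • v - θ‖ = ‖v - ‖v‖ • θ‖ := by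
    have := norm_smul ‖v‖ (‖v‖⁻¹ • v - θ)
    rwa [norm_norm, smul_sub, smul_inv_smul₀ hv', eq_comm] at this
  have hradial : |s - ‖v‖| ≤ ‖v - s • θ‖ := by
    simpa [norm_smul, hθ, abs_of_nonneg hs, norm_sub_rev] using abs_norm_sub_norm_le (s • θ) v
  calc ‖v‖ * ‖‖v‖⁻¹ • v - θ‖ = ‖(v - s • θ) + (s - ‖v‖) • θ‖ := by
        rw [hrescale, sub_smul]; abel_nf
    _ ≤ ‖v - s • θ‖ + |s - ‖v‖| := by
        grw [norm_add_le, norm_smul, hθ, mul_one, Real.norm_eq_abs]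
    _ ≤ 2 * ‖v - s • θ‖ := by linarith

theorem mem_truncatedCone_of_norm_sub_smul_le {θ v : E} {s ρ ε R : ℝ} (hθ : ‖θ‖ = 1)
    (hv : ‖v - s • θ‖ ≤ ρ) (hρs : ρ < s) (hsR : s + ρ < R) (hε : 2 * ρ < ε * (s - ρ)) :
    v ∈ truncatedCone θ ε R := by
  have hρ : 0 ≤ ρ := (norm_nonneg _).trans hv
  have hsθ : ‖s • θ‖ = s := by
    rw [norm_smul, hθ, mul_one, Real.norm_eq_abs, abs_of_pos (by linarith)]
  have hlower : s - ρ ≤ ‖v‖ := by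
    have := norm_sub_norm_le (s • θ) v
    rw [hsθ, norm_sub_rev] at this
    linarith
  have hupper : ‖v‖ ≤ s + ρ := by
    have := norm_le_norm_add_norm_sub' v (s • θ)
    rw [hsθ] at this
    linarith
  have hvpos : 0 < ‖v‖ := by linarith
  refine ⟨norm_pos_iff.1 hvpos, by linarith, ?_⟩
  have key := norm_mul_norm_inv_smul_sub_le hθ v (s := s) (by linarith)
  have hεpos : 0 < ε := (pos_iff_pos_of_mul_pos (by linarith : 0 < ε * (s - ρ))).2 (by linarith)
  by_contra! hge
  nlinarith [mul_le_mul hlower hge hεpos.le hvpos.le]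

end Cone

section Euclidean

variable {ι : Type*} [Fintype ι]

theorem EuclideanSpace.norm_le_sqrt_card_of_forall_abs_le {x : EuclideanSpace ℝ ι}
    (hx : ∀ i, |x i| ≤ 1) : ‖x‖ ≤ √(Fintype.card ι) := by
  rw [EuclideanSpace.norm_eq]
  gcongr
  calc ∑ i, ‖x i‖ ^ 2 ≤ ∑ _i : ι, (1 : ℝ) := by
        gcongr with i
        rw [Real.norm_eq_abs, sq_le_one_iff_abs_le_one, abs_abs]
        exact hx i
    _ = Fintype.card ι := by simp

theorem apply_lt_of_mem_truncatedCone {θ v : EuclideanSpace ℝ ι} {ε R : ℝ}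
    (hv : v ∈ truncatedCone θ ε R) {i : ι} (hθ : 0 ≤ θ i) : v i < (θ i + ε) * R := by
  obtain ⟨hv0, hvR, hvθ⟩ := hv
  have hvpos : 0 < ‖v‖ := norm_pos_iff.2 hv0
  have hcoord : ‖v‖⁻¹ * v i - θ i < ε := by
    have := PiLp.norm_apply_le (‖v‖⁻¹ • v - θ) i
    simp only [PiLp.sub_apply, PiLp.smul_apply, smul_eq_mul, Real.norm_eq_abs] at this
    linarith [le_abs_self (‖v‖⁻¹ * v i - θ i)]
  have hε : 0 < ε := (norm_nonneg _).trans_lt hvθ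
  calc v i = ‖v‖ * (‖v‖⁻¹ * v i) := by field_simp
    _ < ‖v‖ * (θ i + ε) := by gcongr; linarith
    _ ≤ (θ i + ε) * R := by rw [mul_comm]; gcongr

end Euclidean

theorem Nat.card_univ_pi {ι : Type*} [Fintype ι] {α : ι → Type*} (s : ∀ i, Set (α i)) :
    Nat.card (univ.pi s) = ∏ i, Nat.card (s i) := by
  rw [Nat.card_congr (Equiv.Set.univPi s), Nat.card_pi]

section Product

variable {ι : Type*} [Fintype ι] {G X : ι → Type*} [∀ i, Group (G i)] [∀ i, MetricSpace (X i)]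
  [∀ i, MulAction (G i) (X i)] {o : ∀ i, X i} {H : (∀ i, G i) → EuclideanSpace ℝ ι}
  (hH : ∀ g i, H g i = dist (o i) (g i • o i))
  (hfin : ∀ i R, (orbitBall (o i) R : Set (G i)).Finite)
  {θ : EuclideanSpace ℝ ι} (hθ : ∀ i, 0 ≤ θ i) {δ : ι → ℝ} {ε : ℝ} (hε : 0 < ε)
include hH hθ

theorem preimage_truncatedCone_subset_pi (ε R : ℝ) :
    H ⁻¹' truncatedCone θ ε R ⊆ univ.pi fun i => orbitBall (o i) ((θ i + ε) * R) := by
  intro g hg i _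
  show dist (o i) (g i • o i) < _
  rw [← hH]
  exact apply_lt_of_mem_truncatedCone hg (hθ i)

include hfin hε

theorem card_preimage_truncatedCone_le {B : ι → ℝ}
    (hB : ∀ i R, 0 ≤ R → (Nat.card (orbitBall (o i) R : Set (G i)) : ℝ) ≤ B i * exp (δ i * R))
    {R : ℝ} (hR : 0 ≤ R) :
    (Nat.card (H ⁻¹' truncatedCone θ ε R) : ℝ) ≤
      (∏ i, B i) * exp ((∑ i, δ i * (θ i + ε)) * R) := by
  calc (Nat.card (H ⁻¹' truncatedCone θ ε R) : ℝ)
      ≤ ∏ i, (Nat.card (orbitBall (o i) ((θ i + ε) * R) : Set (G i)) : ℝ) := by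
        rw [← Nat.cast_prod, ← Nat.card_univ_pi]
        exact_mod_cast Nat.card_mono (Finite.pi fun i => hfin i _)
          (preimage_truncatedCone_subset_pi hH hθ ε R)
    _ ≤ ∏ i, B i * exp (δ i * ((θ i + ε) * R)) :=
        Finset.prod_le_prod (fun i _ => by positivity)
          fun i _ => hB i _ (mul_nonneg (by linarith [hθ i]) hR)
    _ = (∏ i, B i) * exp ((∑ i, δ i * (θ i + ε)) * R) := by
        simp_rw [Finset.prod_mul_distrib, ← exp_sum, Finset.sum_mul, mul_assoc]

theorem eventually_le_card_preimage_truncatedCone (hθ₁ : ‖θ‖ = 1) {a : ι → ℝ}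
    (ha : ∀ i, 0 < a i)
    (hshell : ∀ i, ∀ᶠ s in atTop, a i * exp (δ i * (θ i * s)) ≤
      (Nat.card {g : G i | |dist (o i) (g • o i) - θ i * s| ≤ 1} : ℝ)) :
    ∃ a₀ > 0, ∀ᶠ R in atTop,
      a₀ * exp ((∑ i, δ i * θ i) * R) ≤ (Nat.card (H ⁻¹' truncatedCone θ ε R) : ℝ) := by
  set ρ := √(Fintype.card ι)
  have hρ : 0 ≤ ρ := sqrt_nonneg _
  have hs : Tendsto (fun R : ℝ => R - (ρ + 1)) atTop atTop :=
    tendsto_atTop_add_const_right _ _ tendsto_id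
  refine ⟨(∏ i, a i) * exp (-((∑ i, δ i * θ i) * (ρ + 1))),
    mul_pos (Finset.prod_pos fun i _ => ha i) (exp_pos _), ?_⟩
  filter_upwards [hs.eventually ((eventually_all.2 hshell).and
    (eventually_gt_atTop (ρ + 2 * ρ / ε)))] with R ⟨hcard, hsρ⟩
  set s := R - (ρ + 1)
  have hsub : (univ.pi fun i => {g : G i | |dist (o i) (g • o i) - θ i * s| ≤ 1}) ⊆
      H ⁻¹' truncatedCone θ ε R := by
    have h2ρ : 2 * ρ < ε * (s - ρ) := by
      have := (div_lt_iff₀' hε).1 (by linarith : 2 * ρ / ε < s - ρ)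
      linarith
    refine fun g hg => mem_truncatedCone_of_norm_sub_smul_le hθ₁ ?_ ?_ (by linarith) h2ρ
    · refine EuclideanSpace.norm_le_sqrt_card_of_forall_abs_le fun i => ?_
      simpa [hH, mul_comm s] using hg i (mem_univ i)
    · linarith [div_nonneg (mul_nonneg zero_le_two hρ) hε.le]
  have hfinCone : (H ⁻¹' truncatedCone θ ε R).Finite :=
    (Finite.pi fun i => hfin i _).subset (preimage_truncatedCone_subset_pi hH hθ ε R)
  calc (∏ i, a i) * exp (-((∑ i, δ i * θ i) * (ρ + 1))) * exp ((∑ i, δ i * θ i) * R)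
      = ∏ i, a i * exp (δ i * (θ i * s)) := by
        rw [Finset.prod_mul_distrib, ← exp_sum, mul_assoc, ← exp_add]
        congr 2
        simp only [s, Finset.sum_mul]
        rw [← Finset.sum_neg_distrib, ← Finset.sum_add_distrib]
        exact Finset.sum_congr rfl fun i _ => by ring
    _ ≤ ∏ i, (Nat.card {g : G i | |dist (o i) (g • o i) - θ i * s| ≤ 1} : ℝ) :=
        Finset.prod_le_prod (fun i _ => (mul_pos (ha i) (exp_pos _)).le) fun i _ => hcard i
    _ ≤ Nat.card (H ⁻¹' truncatedCone θ ε R) := by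
        rw [← Nat.cast_prod, ← Nat.card_univ_pi]
        exact_mod_cast Nat.card_mono hfinCone hsub

end Product

theorem le_limsup_and_limsup_le {α : Type*} {L : Filter α} [L.NeBot] {f l u : α → ℝ} {a b : ℝ}
    (hl : Tendsto l L (𝓝 a)) (hu : Tendsto u L (𝓝 b)) (hlf : ∀ᶠ x in L, l x ≤ f x)
    (hfu : ∀ᶠ x in L, f x ≤ u x) : a ≤ limsup f L ∧ limsup f L ≤ b := by
  have hbdd : IsBoundedUnder (· ≤ ·) L f := hu.isBoundedUnder_le.mono_le hfu
  have hcobdd : IsCoboundedUnder (· ≤ ·) L f :=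
    (hl.isBoundedUnder_ge.mono_ge hlf).isCoboundedUnder_le
  exact ⟨hl.limsup_eq ▸ limsup_le_limsup hlf hl.isBoundedUnder_ge.isCoboundedUnder_le hbdd,
    hu.limsup_eq ▸ limsup_le_limsup hfu hcobdd hu.isBoundedUnder_le⟩

theorem limsup_log_div_mem_Icc {N : ℕ → ℝ} {a b α β : ℝ} (ha : 0 < a)
    (hlow : ∀ᶠ n : ℕ in atTop, a * exp (α * n) ≤ N n)
    (hup : ∀ᶠ n : ℕ in atTop, N n ≤ b * exp (β * n)) :
    α ≤ limsup (fun n : ℕ => log (N n) / n) atTop ∧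
      limsup (fun n : ℕ => log (N n) / n) atTop ≤ β := by
  have hlim : ∀ c γ : ℝ, Tendsto (fun n : ℕ => log c / n + γ) atTop (𝓝 γ) := fun c γ => by
    simpa using (tendsto_const_div_atTop_nhds_zero_nat (log c)).add_const γ
  have hpos : ∀ᶠ n : ℕ in atTop, (0 : ℝ) < n ∧ 0 < N n := by
    filter_upwards [hlow, eventually_gt_atTop 0] with n hlow hn
    exact ⟨Nat.cast_pos.2 hn, (mul_pos ha (exp_pos _)).trans_le hlow⟩
  refine le_limsup_and_limsup_le (hlim a α) (hlim b β) ?_ ?_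
  · filter_upwards [hlow, hpos] with n hlow ⟨hn, _⟩
    rw [div_add' _ _ _ hn.ne', div_le_div_iff_of_pos_right hn]
    simpa [log_mul ha.ne' (exp_pos _).ne'] using log_le_log (mul_pos ha (exp_pos _)) hlow
  · filter_upwards [hup, hpos] with n hup ⟨hn, hN⟩
    have hb : 0 < b := pos_of_mul_pos_left (hN.trans_le hup) (exp_pos _).le
    rw [div_add' _ _ _ hn.ne', div_le_div_iff_of_pos_right hn]
    simpa [log_mul hb.ne' (exp_pos _).ne'] using log_le_log hN hup

theorem stmt7_general (r : ℕ) (X : Fin r → Type*) [∀ i, MetricSpace (X i)]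
    (G : Fin r → Type*) [∀ i, Group (G i)]
    [∀ i, MulAction (G i) (X i)]
    (hiso : ∀ i (g : G i) (x y : X i), dist (g • x) (g • y) = dist x y)
    (o : ∀ i, X i) (C : ℝ) (hC : 0 < C) (δ : Fin r → ℝ) (hδ : ∀ i, 0 < δ i)
    (hcount : ∃ R₀ : ℝ, ∀ i, ∀ R : ℝ, R₀ ≤ R →
      (1 / C) * Real.exp (δ i * R) ≤
        (Nat.card {g : G i | R - 1 ≤ dist (o i) (g • o i) ∧
          dist (o i) (g • o i) < R} : ℝ) ∧
      (Nat.card {g : G i | dist (o i) (g • o i) < R} : ℝ) ≤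
        C * Real.exp (δ i * R))
    -- `H g` is the distance vector of the orbit point of `g` in the ℓ²-product
    (H : (∀ i, G i) → EuclideanSpace ℝ (Fin r))
    (hH : ∀ g i, H g i = dist (o i) (g i • o i)) :
    ∀ θ : EuclideanSpace ℝ (Fin r), ‖θ‖ = 1 → (∀ i, 0 ≤ θ i) →
      Tendsto (fun ε : ℝ =>
          limsup (fun n : ℕ =>
            Real.log (Nat.card {g : ∀ i, G i | H g ≠ 0 ∧ ‖H g‖ < (n : ℝ) ∧
              ‖(‖H g‖)⁻¹ • H g - θ‖ < ε}) / (n : ℝ)) atTop)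
        (nhdsWithin 0 (Set.Ioi 0)) (nhds (∑ i, δ i * θ i)) := by
  intro θ hθ₁ hθ
  obtain ⟨R₀, hcount⟩ := hcount
  have hgrowth : ∀ i, OrbitGrowthBounds (G i) (o i) C (δ i) R₀ := hcount
  have hfin i := (hgrowth i).finite_orbitBall (hiso i) hC
  choose B hB using fun i => (hgrowth i).exists_card_orbitBall_le (hiso i) hC (hδ i).le
  have hbounds : ∀ ε > 0, ∑ i, δ i * θ i ≤ limsup (fun n : ℕ =>
      log (Nat.card (H ⁻¹' truncatedCone θ ε n)) / n) atTop ∧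
      limsup (fun n : ℕ => log (Nat.card (H ⁻¹' truncatedCone θ ε n)) / n) atTop ≤
        ∑ i, δ i * (θ i + ε) := fun ε hε => by
    obtain ⟨a, ha, hlow⟩ := eventually_le_card_preimage_truncatedCone hH hfin hθ hε hθ₁
      (fun _ => one_div_pos.2 hC)
      fun i => (hgrowth i).eventually_le_card_abs_sub_le (hiso i) hC (hθ i)
    exact limsup_log_div_mem_Icc ha (tendsto_natCast_atTop_atTop.eventually hlow)
      (Eventually.of_forall fun n =>
        card_preimage_truncatedCone_le hH hfin hθ hε hB n.cast_nonneg)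
  have hupper : Tendsto (fun ε : ℝ => ∑ i, δ i * (θ i + ε)) (𝓝[>] 0) (𝓝 (∑ i, δ i * θ i)) :=
    ((continuous_finsetSum _ fun i _ => by fun_prop).tendsto' 0 _ (by simp)).mono_left
      nhdsWithin_le_nhds
  exact tendsto_of_tendsto_of_tendsto_of_le_of_le' tendsto_const_nhds hupper
    (eventually_nhdsWithin_of_forall fun ε hε => (hbounds ε hε).1)
    (eventually_nhdsWithin_of_forall fun ε hε => (hbounds ε hε).2)

/-- For a product Γ = Γ₁ × ⋯ × Γ_r of groups with two-sided exponential orbit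
counting bounds (critical exponents δᵢ), the exponent of growth of slope θ of
the product action on the ℓ²-product equals Σᵢ δᵢθᵢ. -/
theorem stmt7 (r : ℕ) (X : Fin r → Type*) [∀ i, MetricSpace (X i)]
    (G : Fin r → Type*) [∀ i, Group (G i)] [∀ i, Countable (G i)]
    [∀ i, MulAction (G i) (X i)]
    (hiso : ∀ i (g : G i) (x y : X i), dist (g • x) (g • y) = dist x y)
    (o : ∀ i, X i) (C : ℝ) (hC : 0 < C) (δ : Fin r → ℝ) (hδ : ∀ i, 0 < δ i)
    (hcount : ∃ R₀ : ℝ, ∀ i, ∀ R : ℝ, R₀ ≤ R →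
      (1 / C) * Real.exp (δ i * R) ≤
        (Nat.card {g : G i | R - 1 ≤ dist (o i) (g • o i) ∧
          dist (o i) (g • o i) < R} : ℝ) ∧
      (Nat.card {g : G i | dist (o i) (g • o i) < R} : ℝ) ≤
        C * Real.exp (δ i * R))
    -- `H g` is the distance vector of the orbit point of `g` in the ℓ²-product
    (H : (∀ i, G i) → EuclideanSpace ℝ (Fin r))
    (hH : ∀ g i, H g i = dist (o i) (g i • o i)) :
    ∀ θ : EuclideanSpace ℝ (Fin r), ‖θ‖ = 1 → (∀ i, 0 ≤ θ i) →
      Tendsto (fun ε : ℝ =>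
          limsup (fun n : ℕ =>
            Real.log (Nat.card {g : ∀ i, G i | H g ≠ 0 ∧ ‖H g‖ < (n : ℝ) ∧
              ‖(‖H g‖)⁻¹ • H g - θ‖ < ε}) / (n : ℝ)) atTop)
        (nhdsWithin 0 (Set.Ioi 0)) (nhds (∑ i, δ i * θ i)) :=
  stmt7_general r X G hiso o C hC δ hδ hcount H hH
end

section
/- Let δ_θ^ε(o,o) denote, for a unit vector θ ∈ ℝ_{≥0}^r and ε > 0, the critical exponent of the restricted Poincaré series Q_θ^{s,ε}(o,o) = Σ_{γ ∈ Γ(o,o;θ,ε)} e^{−s·d(o,γo)}, where Γ(o,o;θ,ε) = {γ ∈ Γ : γo ≠ o, ‖Ĥ(o,γo) − θ‖ < ε}. Define δ_θ(Γ) = lim_{ε→0} δ_θ^ε(o,o). Then the map θ ↦ δ_θ(Γ) is upper semi-continuous: for any sequence θ^{(j)} → θ in the unit sphere of ℝ_{≥0}^r, limsup_{j→∞} δ_{θ^{(j)}}(Γ) ≤ δ_θ(Γ). -/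
/-! δ_{θ'}(Γ) ≤ δ_{θ'}^{ε/2} by definition, and for ‖θ' - θ‖ < ε/2 the cone of
directions around θ' of width ε/2 lies in the cone around θ of width ε, so the restricted
Poincaré series of θ' is a subseries of that of θ and δ_{θ'}^{ε/2} ≤ δ_θ^ε. Taking the
infimum over ε gives upper semi-continuity of θ ↦ δ_θ(Γ). -/

open Filter

/-- The critical exponent (in ℝ ∪ {±∞}) of the restricted Poincaré series
Q_θ^{s,ε}(o,o) = Σ_{γ : γo≠o, ‖Ĥ(o,γo)−θ‖<ε} e^{−s·d(o,γo)}. -/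
noncomputable def critExp {Γ X : Type*} [MetricSpace X] [Group Γ] [MulAction Γ X]
    {r : ℕ} (H : Γ → EuclideanSpace ℝ (Fin r)) (o : X)
    (θ : EuclideanSpace ℝ (Fin r)) (ε : ℝ) : EReal :=
  sInf (Real.toEReal '' {s : ℝ |
    Summable (fun γ : {γ : Γ // γ • o ≠ o ∧ ‖(dist o (γ • o))⁻¹ • H γ - θ‖ < ε} =>
      Real.exp (-s * dist o ((γ : Γ) • o)))})

/-- The exponent of growth of slope θ: δ_θ(Γ) = lim_{ε→0} δ_θ^ε(o,o), realized
as the infimum over ε > 0 since δ_θ^ε is nonincreasing in ε. -/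
noncomputable def growthExp {Γ X : Type*} [MetricSpace X] [Group Γ] [MulAction Γ X]
    {r : ℕ} (H : Γ → EuclideanSpace ℝ (Fin r)) (o : X)
    (θ : EuclideanSpace ℝ (Fin r)) : EReal :=
  ⨅ (ε : ℝ) (_ : 0 < ε), critExp H o θ ε

open Topology

lemma Summable.subtype_of_imp {ι α : Type*} [AddCommGroup α] [UniformSpace α]
    [IsUniformAddGroup α] [CompleteSpace α] {g : ι → α} {P Q : ι → Prop}
    (hPQ : ∀ i, P i → Q i) (hs : Summable fun i : {i // Q i} => g i) :
    Summable fun i : {i // P i} => g i :=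
  hs.comp_injective (i := Subtype.map id hPQ) fun _ _ h =>
    Subtype.ext (congrArg Subtype.val h :)

section GrowthExponent

variable {Γ X : Type*} [MetricSpace X] [Group Γ] [MulAction Γ X] {r : ℕ}
  (H : Γ → EuclideanSpace ℝ (Fin r)) (o : X)

lemma critExp_mono_of_ball_subset {θ₁ θ₂ : EuclideanSpace ℝ (Fin r)} {ε₁ ε₂ : ℝ}
    (h : Metric.ball θ₁ ε₁ ⊆ Metric.ball θ₂ ε₂) :
    critExp H o θ₁ ε₁ ≤ critExp H o θ₂ ε₂ := by
  refine sInf_le_sInf (Set.image_mono fun s hs => ?_)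
  exact Summable.subtype_of_imp (g := fun γ => Real.exp (-s * dist o (γ • o)))
    (fun γ hγ => ⟨hγ.1, mem_ball_iff_norm.1 (h (mem_ball_iff_norm.2 hγ.2))⟩) hs

lemma eventually_growthExp_le_critExp (θ : EuclideanSpace ℝ (Fin r)) {ε : ℝ} (hε : 0 < ε) :
    ∀ᶠ θ' in 𝓝 θ, growthExp H o θ' ≤ critExp H o θ ε := by
  filter_upwards [Metric.ball_mem_nhds θ (half_pos hε)] with θ' hθ'
  calc growthExp H o θ' ≤ critExp H o θ' (ε / 2) := iInf₂_le _ (half_pos hε)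
    _ ≤ critExp H o θ ε := critExp_mono_of_ball_subset H o <|
        Metric.ball_subset_ball' (by linarith [Metric.mem_ball.1 hθ'])

theorem growthExp_upperSemicontinuous : UpperSemicontinuous (growthExp H o) :=
  upperSemicontinuous_iff_limsup_le.2 fun θ =>
    le_iInf₂ fun ε hε => limsup_le_of_le (by isBoundedDefault)
      (eventually_growthExp_le_critExp H o θ hε)

end GrowthExponent

theorem stmt9_general (r : ℕ) {Γ X : Type*} [MetricSpace X] [Group Γ]
    [MulAction Γ X]
    (o : X)
    (H : Γ → EuclideanSpace ℝ (Fin r))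
    (θseq : ℕ → EuclideanSpace ℝ (Fin r)) (θ : EuclideanSpace ℝ (Fin r))
    (hconv : Tendsto θseq atTop (nhds θ)) :
    limsup (fun j => growthExp H o (θseq j)) atTop ≤ growthExp H o θ :=
  (hconv.limsup_comp_le_limsup (u := growthExp H o)).trans
    ((growthExp_upperSemicontinuous H o).limsup_le θ)

/-- Upper semi-continuity of the exponent of growth: if θ⁽ʲ⁾ → θ in the unit
sphere of ℝ₊ʳ then limsup δ_{θ⁽ʲ⁾}(Γ) ≤ δ_θ(Γ). -/
theorem stmt9 (r : ℕ) {Γ X : Type*} [MetricSpace X] [Group Γ] [Countable Γ]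
    [MulAction Γ X]
    (hiso : ∀ (γ : Γ) (x y : X), dist (γ • x) (γ • y) = dist x y)
    (o : X)
    (hproper : ∀ R : ℝ, {γ : Γ | dist o (γ • o) ≤ R}.Finite)
    (H : Γ → EuclideanSpace ℝ (Fin r))
    (hH : ∀ γ, ‖H γ‖ = dist o (γ • o) ∧ ∀ i, 0 ≤ H γ i)
    (θseq : ℕ → EuclideanSpace ℝ (Fin r)) (θ : EuclideanSpace ℝ (Fin r))
    (hunit : ∀ j, ‖θseq j‖ = 1) (hpos : ∀ j i, 0 ≤ θseq j i)
    (hθ : ‖θ‖ = 1) (hθpos : ∀ i, 0 ≤ θ i)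
    (hconv : Tendsto θseq atTop (nhds θ)) :
    limsup (fun j => growthExp H o (θseq j)) atTop ≤ growthExp H o θ :=
  stmt9_general r o H θseq θ hconv
end

section
/- Let o be a basepoint of a metric space X, and γ an isometry of X written as γ = α μ⁻¹ λ β for isometries α, β, λ, μ. Suppose d(o,λo) ≤ d, d(o,μo) ≤ d, and there is a point y ∈ X with d(o,y) ≤ c lying on a geodesic from μα⁻¹o to λβo, so that d(λβo, μα⁻¹o) = d(λβo,y) + d(y,μα⁻¹o). Then |d(o,γo) − d(o,βo) − d(o,α⁻¹o)| ≤ 2c + 2d. -/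
/-- Key estimate for the generic product γ = α μ⁻¹ λ β: if d(o,λo) ≤ d,
d(o,μo) ≤ d and some point y with d(o,y) ≤ c lies on a geodesic from μα⁻¹o to
λβo, then |d(o,γo) − d(o,βo) − d(o,α⁻¹o)| ≤ 2c + 2d. -/
theorem stmt16 {X : Type*} [MetricSpace X] (α β lam mu : X ≃ᵢ X) (o y : X)
    (c d : ℝ) (hc : 0 < c) (hd : 0 < d)
    (hlam : dist o (lam o) ≤ d) (hmu : dist o (mu o) ≤ d)
    (hy : dist o y ≤ c)
    (hgeo : dist (lam (β o)) (mu (α.symm o)) =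
      dist (lam (β o)) y + dist y (mu (α.symm o))) :
    |dist o ((α * mu⁻¹ * lam * β) o) - dist o (β o) - dist o (α.symm o)| ≤
      2 * c + 2 * d := by
  have hmul : (α * mu⁻¹ * lam * β) o = α (mu.symm (lam (β o))) := rfl
  have h1 : dist o ((α * mu⁻¹ * lam * β) o) = dist (lam (β o)) (mu (α.symm o)) := by
    rw [hmul]
    calc dist o (α (mu.symm (lam (β o))))
        = dist (α (α.symm o)) (α (mu.symm (lam (β o)))) := by rw [α.apply_symm_apply]
      _ = dist (α.symm o) (mu.symm (lam (β o))) := α.dist_eq _ _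
      _ = dist (mu (α.symm o)) (mu (mu.symm (lam (β o)))) := (mu.dist_eq _ _).symm
      _ = dist (mu (α.symm o)) (lam (β o)) := by rw [mu.apply_symm_apply]
      _ = dist (lam (β o)) (mu (α.symm o)) := dist_comm _ _
  have hyo : dist y o ≤ c := by rw [dist_comm]; exact hy
  have A : |dist (lam (β o)) y - dist o (β o)| ≤ c + d := by
    have t1 : |dist y (lam (β o)) - dist o (lam (β o))| ≤ dist y o :=
      abs_dist_sub_le _ _ _
    have t2 : |dist o (lam (β o)) - dist (lam o) (lam (β o))| ≤ dist o (lam o) :=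
      abs_dist_sub_le _ _ _
    have e : dist (lam o) (lam (β o)) = dist o (β o) := lam.dist_eq _ _
    have key : |dist (lam (β o)) y - dist o (β o)| =
        |dist y (lam (β o)) - dist (lam o) (lam (β o))| := by
      rw [dist_comm (lam (β o)) y, e]
    rw [key]
    calc |dist y (lam (β o)) - dist (lam o) (lam (β o))|
        ≤ |dist y (lam (β o)) - dist o (lam (β o))| +
          |dist o (lam (β o)) - dist (lam o) (lam (β o))| := abs_sub_le _ _ _
      _ ≤ c + d := by linarith
  have B : |dist y (mu (α.symm o)) - dist o (α.symm o)| ≤ c + d := by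
    have t1 : |dist y (mu (α.symm o)) - dist o (mu (α.symm o))| ≤ dist y o :=
      abs_dist_sub_le _ _ _
    have t2 : |dist o (mu (α.symm o)) - dist (mu o) (mu (α.symm o))| ≤ dist o (mu o) :=
      abs_dist_sub_le _ _ _
    have e : dist (mu o) (mu (α.symm o)) = dist o (α.symm o) := mu.dist_eq _ _
    calc |dist y (mu (α.symm o)) - dist o (α.symm o)|
        = |dist y (mu (α.symm o)) - dist (mu o) (mu (α.symm o))| := by rw [e]
      _ ≤ |dist y (mu (α.symm o)) - dist o (mu (α.symm o))| +
          |dist o (mu (α.symm o)) - dist (mu o) (mu (α.symm o))| := abs_sub_le _ _ _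
      _ ≤ c + d := by linarith
  rw [h1, hgeo]
  obtain ⟨a1, a2⟩ := abs_le.mp A
  obtain ⟨b1, b2⟩ := abs_le.mp B
  rw [abs_le]
  constructor <;> linarith
end
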